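/- Hermite interpolation of values (part 1 of the interpolation theorem): in the subspace framework for minimizing α_ε(P(·;ν)), if for parameter value ν^(ℓ) the subspace V_k (k ≥ ℓ) contains a right singular vector corresponding to σ_min(P(z^(ℓ); ν^(ℓ))) where z^(ℓ) is a rightmost point of Λ_ε(P(·; ν^(ℓ))), then α_ε(P(·; ν^(ℓ))) = α_ε^{V_k}(P(·; ν^(ℓ))). -/

import Mathlib

open Matrix Complex

/-- Euclidean norm of a complex vector. -/
noncomputable def vnorm {ι : Type*} [Fintype ι] (v : ι → ℂ) : ℝ :=
  Real.sqrt (∑ i, ‖v i‖ ^ 2)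

/-- Smallest singular value of a (possibly rectangular) complex matrix:
the infimum of `‖A v‖` over unit vectors `v`. -/
noncomputable def sigmaMin {ι κ : Type*} [Fintype ι] [Fintype κ]
    (A : Matrix ι κ ℂ) : ℝ :=
  sInf {t : ℝ | ∃ v : κ → ℂ, vnorm v = 1 ∧ t = vnorm (A.mulVec v)}

/-- Spectral (operator 2-) norm of a complex matrix. -/
noncomputable def specNorm {ι κ : Type*} [Fintype ι] [Fintype κ]
    (A : Matrix ι κ ℂ) : ℝ :=
  sSup {t : ℝ | ∃ v : κ → ℂ, vnorm v = 1 ∧ t = vnorm (A.mulVec v)}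

/-- The weight/scaling function `p_w(z) = √(w_m² z⁴ + w_c² z² + w_k²)`. -/
noncomputable def pw (wm wc wk z : ℝ) : ℝ :=
  Real.sqrt (wm ^ 2 * z ^ 4 + wc ^ 2 * z ^ 2 + wk ^ 2)

/-- The quadratic matrix polynomial `P(z) = z² M + z C + K`. -/
noncomputable def Ppoly {n : ℕ} (M C K : Matrix (Fin n) (Fin n) ℂ) (z : ℂ) :
    Matrix (Fin n) (Fin n) ℂ :=
  z ^ 2 • M + z • C + K

/-- The column span (range) of a matrix, viewed as a subspace of `ℂⁿ`. -/
noncomputable def colSpan {n r : ℕ} (A : Matrix (Fin n) (Fin r) ℂ) : Submodule ℂ (Fin n → ℂ) :=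
  Submodule.span ℂ (Set.range fun j => fun i => A i j)

/-- The ε-pseudospectrum of the quadratic matrix polynomial `P(λ)=λ²M+λC+K`
(singular value characterization). -/
noncomputable def Lam {n : ℕ} (M C K : Matrix (Fin n) (Fin n) ℂ)
    (ε wm wc wk : ℝ) : Set ℂ :=
  {z : ℂ | sigmaMin (Ppoly M C K z) ≤ ε * pw wm wc wk ‖z‖}

/-- The restricted ε-pseudospectrum determined by the basis matrix `Vm`. -/
noncomputable def LamRes {n r : ℕ} (M C K : Matrix (Fin n) (Fin n) ℂ)
    (Vm : Matrix (Fin n) (Fin r) ℂ) (ε wm wc wk : ℝ) : Set ℂ :=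
  {z : ℂ | sigmaMin (Ppoly M C K z * Vm) ≤ ε * pw wm wc wk ‖z‖}

/-!
Because `V` has orthonormal columns, `σ_min(P(z) V)` is an infimum of `‖P(z) x‖` over a subset of
the unit vectors, so `σ_min(P(z)) ≤ σ_min(P(z) V)` and the restricted pseudospectrum lies inside
the full one; hence `α_ε^V ≤ α_ε`. Conversely, writing the singular vector as `v = V w` with
`‖w‖ = 1` gives `σ_min(P(z^(ℓ)) V) ≤ ‖P(z^(ℓ)) v‖ = σ_min(P(z^(ℓ)))`, so the rightmost point
`z^(ℓ)` of `Λ_ε` also lies in the restricted pseudospectrum and `α_ε ≤ α_ε^V`.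
-/

section SingularValues

variable {ι κ μ : Type*} [Fintype ι] [Fintype κ] [Fintype μ]

lemma vnorm_nonneg (v : κ → ℂ) : 0 ≤ vnorm v :=
  Real.sqrt_nonneg _

lemma sum_norm_sq_eq_re_star_dotProduct (x : κ → ℂ) :
    ∑ i, ‖x i‖ ^ 2 = (star x ⬝ᵥ x).re := by
  simp only [dotProduct, Pi.star_apply, Complex.star_def, Complex.conj_mul', Complex.re_sum]
  norm_cast

lemma vnorm_mulVec_of_conjTranspose_mul_self_eq_one [DecidableEq μ] {V : Matrix κ μ ℂ}
    (hV : Vᴴ * V = 1) (w : μ → ℂ) : vnorm (V *ᵥ w) = vnorm w := by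
  unfold vnorm
  rw [sum_norm_sq_eq_re_star_dotProduct, sum_norm_sq_eq_re_star_dotProduct, star_mulVec,
    dotProduct_mulVec, vecMul_vecMul, hV, vecMul_one]

lemma vnorm_single_one [DecidableEq κ] (i : κ) : vnorm (Pi.single i (1 : ℂ)) = 1 := by
  rw [vnorm, Finset.sum_eq_single i (fun j _ hj => by simp [hj]) (by simp)]
  simp

lemma nonempty_of_vnorm_eq_one {w : κ → ℂ} (hw : vnorm w = 1) : Nonempty κ := by
  by_contra h
  rw [not_nonempty_iff] at h
  simp [vnorm] at hw

lemma bddBelow_vnorm_mulVec_unit (A : Matrix ι κ ℂ) :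
    BddBelow {t : ℝ | ∃ v : κ → ℂ, vnorm v = 1 ∧ t = vnorm (A *ᵥ v)} :=
  ⟨0, by rintro t ⟨v, _, rfl⟩; exact vnorm_nonneg _⟩

lemma sigmaMin_le_vnorm_mulVec (A : Matrix ι κ ℂ) {v : κ → ℂ} (hv : vnorm v = 1) :
    sigmaMin A ≤ vnorm (A *ᵥ v) :=
  csInf_le (bddBelow_vnorm_mulVec_unit A) ⟨v, hv, rfl⟩

lemma sigmaMin_le_sigmaMin_mul_of_conjTranspose_mul_self_eq_one [Nonempty μ] [DecidableEq μ]
    (A : Matrix ι κ ℂ) {V : Matrix κ μ ℂ} (hV : Vᴴ * V = 1) :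
    sigmaMin A ≤ sigmaMin (A * V) := by
  obtain ⟨j⟩ := ‹Nonempty μ›
  refine csInf_le_csInf (bddBelow_vnorm_mulVec_unit A) ⟨_, _, vnorm_single_one j, rfl⟩ ?_
  rintro t ⟨w, hw, rfl⟩
  exact ⟨V *ᵥ w, by rwa [vnorm_mulVec_of_conjTranspose_mul_self_eq_one hV], by
    rw [mulVec_mulVec]⟩

end SingularValues

lemma mem_colSpan_iff_exists_mulVec {n r : ℕ} {V : Matrix (Fin n) (Fin r) ℂ} {v : Fin n → ℂ} :
    v ∈ colSpan V ↔ ∃ w, V *ᵥ w = v := by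
  change v ∈ Submodule.span ℂ (Set.range V.col) ↔ _
  rw [← range_mulVecLin]
  rfl

lemma sSup_image_eq_of_subset_of_apply_eq_sSup {α : Type*} {f : α → ℝ} {s t : Set α}
    (ht : BddAbove (f '' t)) (hst : s ⊆ t) {z : α} (hz : z ∈ s) (hmax : f z = sSup (f '' t)) :
    sSup (f '' t) = sSup (f '' s) :=
  le_antisymm (hmax ▸ le_csSup (ht.mono (Set.image_mono hst)) ⟨z, hz, rfl⟩)
    (csSup_le_csSup ht ⟨f z, z, hz, rfl⟩ (Set.image_mono hst))

section Pseudospectra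

variable {n r : ℕ} {M C K : Matrix (Fin n) (Fin n) ℂ} {V : Matrix (Fin n) (Fin r) ℂ}
  {ε wm wc wk : ℝ}

lemma LamRes_subset_Lam [Nonempty (Fin r)] (hV : Vᴴ * V = 1) :
    LamRes M C K V ε wm wc wk ⊆ Lam M C K ε wm wc wk := fun _ hz =>
  (sigmaMin_le_sigmaMin_mul_of_conjTranspose_mul_self_eq_one _ hV).trans hz

lemma mem_LamRes_of_mulVec_eq_sigmaMin {z : ℂ} (hz : z ∈ Lam M C K ε wm wc wk)
    {w : Fin r → ℂ} (hw : vnorm w = 1)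
    (hsing : vnorm (Ppoly M C K z *ᵥ (V *ᵥ w)) = sigmaMin (Ppoly M C K z)) :
    z ∈ LamRes M C K V ε wm wc wk := by
  have h := sigmaMin_le_vnorm_mulVec (Ppoly M C K z * V) hw
  rw [← mulVec_mulVec, hsing] at h
  exact h.trans hz

end Pseudospectra

theorem hermite_interpolation_values_general
    {n d r : ℕ}
    (Mf Cf Kf : (Fin d → ℝ) → Matrix (Fin n) (Fin n) ℂ)
    (νl : Fin d → ℝ)
    (ε wm wc wk : ℝ)
    (Vm : Matrix (Fin n) (Fin r) ℂ) (hVm : Vmᴴ * Vm = 1)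
    (hbd : Bornology.IsBounded (Lam (Mf νl) (Cf νl) (Kf νl) ε wm wc wk))
    (zl : ℂ) (hzl : zl ∈ Lam (Mf νl) (Cf νl) (Kf νl) ε wm wc wk)
    (hzlRight : zl.re = sSup (Complex.re '' Lam (Mf νl) (Cf νl) (Kf νl) ε wm wc wk))
    (v : Fin n → ℂ) (hvMem : v ∈ colSpan Vm) (hvUnit : vnorm v = 1)
    (hvSing : vnorm ((Ppoly (Mf νl) (Cf νl) (Kf νl) zl).mulVec v) =
      sigmaMin (Ppoly (Mf νl) (Cf νl) (Kf νl) zl)) :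
    sSup (Complex.re '' Lam (Mf νl) (Cf νl) (Kf νl) ε wm wc wk) =
      sSup (Complex.re '' LamRes (Mf νl) (Cf νl) (Kf νl) Vm ε wm wc wk) := by
  obtain ⟨w, rfl⟩ := mem_colSpan_iff_exists_mulVec.mp hvMem
  have hw : vnorm w = 1 := by
    rwa [vnorm_mulVec_of_conjTranspose_mul_self_eq_one hVm] at hvUnit
  have : Nonempty (Fin r) := nonempty_of_vnorm_eq_one hw
  have hbdRe := (Complex.reCLM.lipschitz.isBounded_image hbd).bddAbove
  exact sSup_image_eq_of_subset_of_apply_eq_sSup hbdRe (LamRes_subset_Lam hVm)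
    (mem_LamRes_of_mulVec_eq_sigmaMin hzl hw hvSing) hzlRight

/-- Hermite interpolation of values: in the subspace framework for the
parameter-dependent polynomial `P(λ;ν) = λ²M(ν)+λC(ν)+K(ν)`, if the subspace spanned
by the orthonormal columns of `Vm` contains a right singular vector corresponding to
`σ_min(P(z^(ℓ);ν^(ℓ)))` at a rightmost point `z^(ℓ)` of the bounded pseudospectrum
`Λ_ε(P(·;ν^(ℓ)))`, then `α_ε(P(·;ν^(ℓ))) = α_ε^{V}(P(·;ν^(ℓ)))`. -/
theorem hermite_interpolation_values
    {n d r : ℕ} (hr : 0 < r)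
    (Mf Cf Kf : (Fin d → ℝ) → Matrix (Fin n) (Fin n) ℂ)
    (νl : Fin d → ℝ)
    (ε wm wc wk : ℝ) (hε : 0 < ε) (hwm : 0 ≤ wm) (hwc : 0 ≤ wc) (hwk : 0 ≤ wk)
    (Vm : Matrix (Fin n) (Fin r) ℂ) (hVm : Vmᴴ * Vm = 1)
    (hbd : Bornology.IsBounded (Lam (Mf νl) (Cf νl) (Kf νl) ε wm wc wk))
    (zl : ℂ) (hzl : zl ∈ Lam (Mf νl) (Cf νl) (Kf νl) ε wm wc wk)
    (hzlRight : zl.re = sSup (Complex.re '' Lam (Mf νl) (Cf νl) (Kf νl) ε wm wc wk))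
    (v : Fin n → ℂ) (hvMem : v ∈ colSpan Vm) (hvUnit : vnorm v = 1)
    (hvSing : vnorm ((Ppoly (Mf νl) (Cf νl) (Kf νl) zl).mulVec v) =
      sigmaMin (Ppoly (Mf νl) (Cf νl) (Kf νl) zl)) :
    sSup (Complex.re '' Lam (Mf νl) (Cf νl) (Kf νl) ε wm wc wk) =
      sSup (Complex.re '' LamRes (Mf νl) (Cf νl) (Kf νl) Vm ε wm wc wk) :=
  hermite_interpolation_values_general Mf Cf Kf νl ε wm wc wk Vm hVm hbd zl hzl hzlRight v hvMem
    hvUnit hvSing
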